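/- Let (X, d) be a compact quasihypermetric space. If there exist a sequence μ_n of mass-1 signed measures and constants α, β ∈ ℝ with I(μ_n) → α and d_{μ_n} → β·1 uniformly on X, then M(X) ≤ 2β − α < ∞. -/

import Mathlib

open MeasureTheory

/-- Integral of a function against a finite signed Borel measure, via Jordan decomposition. -/
noncomputable def sInt {X : Type*} [MeasurableSpace X] (μ : SignedMeasure X) (f : X → ℝ) : ℝ :=
  (∫ x, f x ∂μ.toJordanDecomposition.posPart) - ∫ x, f x ∂μ.toJordanDecomposition.negPart

/-- Energy `I(μ, ν) = ∫∫ d(x,y) dμ(x) dν(y)` with respect to a kernel `d`. -/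
noncomputable def en {X : Type*} [MeasurableSpace X] (d : X → X → ℝ)
    (μ ν : SignedMeasure X) : ℝ :=
  sInt μ (fun x => sInt ν (fun y => d x y))

/-- The potential `d_μ(x) = ∫ d(x,y) dμ(y)`. -/
noncomputable def dPot {X : Type*} [MeasurableSpace X] (d : X → X → ℝ)
    (μ : SignedMeasure X) (x : X) : ℝ :=
  sInt μ (fun y => d x y)

/-- The set of energies `I(μ)` of signed Borel measures of total mass one. -/
noncomputable def MSet (X : Type*) [MetricSpace X] [MeasurableSpace X] : Set ℝ :=
  {r | ∃ μ : SignedMeasure X, μ Set.univ = (1 : ℝ) ∧ en (fun x y => dist x y) μ μ = r}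

/-!
Quasihypermetricity applied to the mass-zero measure `ν - μₙ` gives, by bilinearity and symmetry
of the energy, `I(ν) ≤ 2 I(ν, μₙ) - I(μₙ)`. Now `I(ν, μₙ) = ∫ d_{μₙ} dν` tends to `β ν(X) = β`
because `d_{μₙ} → β` uniformly, so the right-hand side tends to `2β - α`.
-/

section MeasurableSpace

variable {X : Type*} [MeasurableSpace X]

lemma MeasureTheory.SignedMeasure.eq_posPart_sub_negPart (μ : SignedMeasure X) :
    μ = μ.toJordanDecomposition.posPart.toSignedMeasure
      - μ.toJordanDecomposition.negPart.toSignedMeasure :=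
  μ.toSignedMeasure_toJordanDecomposition.symm

lemma sInt_const (μ : SignedMeasure X) (c : ℝ) : sInt μ (fun _ => c) = c * μ Set.univ := by
  conv_rhs => rw [SignedMeasure.eq_posPart_sub_negPart μ]
  rw [sInt, integral_const, integral_const, _root_.sub_apply,
    Measure.toSignedMeasure_apply_measurable MeasurableSet.univ,
    Measure.toSignedMeasure_apply_measurable MeasurableSet.univ, smul_eq_mul, smul_eq_mul]
  ring

lemma tendsto_integral_of_tendstoUniformly {ι E : Type*} [NormedAddCommGroup E]
    [NormedSpace ℝ E] {m : Measure X} [IsFiniteMeasure m] {l : Filter ι} {F : ι → X → E}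
    {f : X → E} (hF : ∀ᶠ i in l, Integrable (F i) m) (hf : Integrable f m)
    (h : TendstoUniformly F f l) :
    Filter.Tendsto (fun i => ∫ x, F i x ∂m) l (nhds (∫ x, f x ∂m)) := by
  refine Metric.tendsto_nhds.mpr fun ε hε => ?_
  have hδ : 0 < ε / (m.real Set.univ + 1) := by positivity
  filter_upwards [hF, Metric.tendstoUniformly_iff.mp h _ hδ] with i hFi hclose
  rw [dist_eq_norm, ← integral_sub hFi hf]
  calc ‖∫ x, F i x - f x ∂m‖ ≤ ε / (m.real Set.univ + 1) * m.real Set.univ :=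
        norm_integral_le_of_norm_le_const (ae_of_all _ fun x => by
          rw [← dist_eq_norm, dist_comm]; exact (hclose x).le)
    _ < ε := by
        rw [div_mul_eq_mul_div, div_lt_iff₀ (by positivity)]
        nlinarith [measureReal_nonneg (μ := m) (s := Set.univ)]

end MeasurableSpace

section CompactSpace

variable {X : Type*} [TopologicalSpace X] [CompactSpace X] [MeasurableSpace X]
  [OpensMeasurableSpace X]

lemma Continuous.integrable_of_compactSpace {E : Type*} [NormedAddCommGroup E] {f : X → E}
    (hf : Continuous f) (m : Measure X) [IsFiniteMeasure m] : Integrable f m :=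
  hf.integrable_of_hasCompactSupport (HasCompactSupport.of_compactSpace f)

lemma sInt_eq_of_eq_sub {μ : SignedMeasure X} {P N : Measure X} [IsFiniteMeasure P]
    [IsFiniteMeasure N] (h : μ = P.toSignedMeasure - N.toSignedMeasure) {f : X → ℝ}
    (hf : Continuous f) : sInt μ f = (∫ x, f x ∂P) - ∫ x, f x ∂N := by
  set J := μ.toJordanDecomposition
  have hJ : J.posPart + N = P + J.negPart := by
    rw [← Measure.toSignedMeasure_eq_toSignedMeasure_iff, Measure.toSignedMeasure_add,
      Measure.toSignedMeasure_add, ← sub_eq_sub_iff_add_eq_add, ← h]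
    exact μ.toSignedMeasure_toJordanDecomposition
  have hint := congrArg (fun m => ∫ x, f x ∂m) hJ
  simp only [integral_add_measure (hf.integrable_of_compactSpace _)
    (hf.integrable_of_compactSpace _)] at hint
  rw [sInt]
  linarith

lemma sInt_sub_measure (μ ν : SignedMeasure X) {f : X → ℝ} (hf : Continuous f) :
    sInt (μ - ν) f = sInt μ f - sInt ν f := by
  set Jμ := μ.toJordanDecomposition
  set Jν := ν.toJordanDecomposition
  have h : μ - ν = (Jμ.posPart + Jν.negPart).toSignedMeasure
      - (Jμ.negPart + Jν.posPart).toSignedMeasure := by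
    rw [Measure.toSignedMeasure_add, Measure.toSignedMeasure_add]
    conv_lhs => rw [SignedMeasure.eq_posPart_sub_negPart μ,
      SignedMeasure.eq_posPart_sub_negPart ν]
    abel
  rw [sInt_eq_of_eq_sub h hf, integral_add_measure (hf.integrable_of_compactSpace _)
    (hf.integrable_of_compactSpace _), integral_add_measure (hf.integrable_of_compactSpace _)
    (hf.integrable_of_compactSpace _), sInt, sInt]
  ring

lemma sInt_sub (μ : SignedMeasure X) {f g : X → ℝ} (hf : Continuous f) (hg : Continuous g) :
    sInt μ (fun x => f x - g x) = sInt μ f - sInt μ g := by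
  simp only [sInt]
  rw [integral_sub (hf.integrable_of_compactSpace _) (hg.integrable_of_compactSpace _),
    integral_sub (hf.integrable_of_compactSpace _) (hg.integrable_of_compactSpace _)]
  ring

lemma tendsto_sInt_of_tendstoUniformly {ι : Type*} (μ : SignedMeasure X) {l : Filter ι}
    {F : ι → X → ℝ} {f : X → ℝ} (hF : ∀ i, Continuous (F i)) (hf : Continuous f)
    (h : TendstoUniformly F f l) :
    Filter.Tendsto (fun i => sInt μ (F i)) l (nhds (sInt μ f)) :=
  (tendsto_integral_of_tendstoUniformly (.of_forall fun i => (hF i).integrable_of_compactSpace _)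
    (hf.integrable_of_compactSpace _) h).sub
  (tendsto_integral_of_tendstoUniformly (.of_forall fun i => (hF i).integrable_of_compactSpace _)
    (hf.integrable_of_compactSpace _) h)

end CompactSpace

section Kernel

variable {X : Type*} [TopologicalSpace X] [CompactSpace X] [SecondCountableTopology X]
  [MeasurableSpace X] [BorelSpace X] {d : X → X → ℝ}

lemma integral_integral_comm_of_symm (hd : Continuous (Function.uncurry d))
    (hsymm : ∀ x y, d x y = d y x) (a b : Measure X) [IsFiniteMeasure a] [IsFiniteMeasure b] :
    ∫ x, ∫ y, d x y ∂b ∂a = ∫ x, ∫ y, d x y ∂a ∂b := by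
  rw [integral_integral_swap (hd.integrable_of_compactSpace _)]
  simp only [hsymm]

variable [T2Space X]

lemma continuous_integral_kernel (hd : Continuous (Function.uncurry d)) (m : Measure X)
    [IsFiniteMeasure m] : Continuous fun x => ∫ y, d x y ∂m := by
  simpa only [Measure.restrict_univ] using
    continuous_parametric_integral_of_continuous (μ := m) hd isCompact_univ

lemma continuous_dPot (hd : Continuous (Function.uncurry d)) (μ : SignedMeasure X) :
    Continuous (dPot d μ) :=
  (continuous_integral_kernel hd _).sub (continuous_integral_kernel hd _)

lemma en_eq_integral_integral (hd : Continuous (Function.uncurry d)) (μ ν : SignedMeasure X) :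
    en d μ ν =
      (∫ x, ∫ y, d x y ∂ν.toJordanDecomposition.posPart ∂μ.toJordanDecomposition.posPart)
      - (∫ x, ∫ y, d x y ∂ν.toJordanDecomposition.negPart ∂μ.toJordanDecomposition.posPart)
      - (∫ x, ∫ y, d x y ∂ν.toJordanDecomposition.posPart ∂μ.toJordanDecomposition.negPart)
      + (∫ x, ∫ y, d x y ∂ν.toJordanDecomposition.negPart ∂μ.toJordanDecomposition.negPart) := by
  change sInt μ (fun x => _ - _) = _
  rw [sInt_sub μ (continuous_integral_kernel hd _) (continuous_integral_kernel hd _)]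
  simp only [sInt]
  ring

lemma en_comm (hd : Continuous (Function.uncurry d)) (hsymm : ∀ x y, d x y = d y x)
    (μ ν : SignedMeasure X) : en d μ ν = en d ν μ := by
  rw [en_eq_integral_integral hd μ ν, en_eq_integral_integral hd ν μ]
  simp only [integral_integral_comm_of_symm hd hsymm ν.toJordanDecomposition.posPart,
    integral_integral_comm_of_symm hd hsymm ν.toJordanDecomposition.negPart]
  ring

lemma en_sub_left (hd : Continuous (Function.uncurry d)) (μ ν ρ : SignedMeasure X) :
    en d (μ - ν) ρ = en d μ ρ - en d ν ρ :=
  sInt_sub_measure μ ν (continuous_dPot hd ρ)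

lemma en_sub_right (hd : Continuous (Function.uncurry d)) (μ ν ρ : SignedMeasure X) :
    en d μ (ν - ρ) = en d μ ν - en d μ ρ := by
  have hinner : ∀ x, sInt (ν - ρ) (fun y => d x y) = dPot d ν x - dPot d ρ x := fun x =>
    sInt_sub_measure ν ρ (hd.uncurry_left x)
  rw [en, funext hinner, sInt_sub μ (continuous_dPot hd ν) (continuous_dPot hd ρ)]
  rfl

lemma en_sub_sub (hd : Continuous (Function.uncurry d)) (hsymm : ∀ x y, d x y = d y x)
    (μ ν : SignedMeasure X) :
    en d (ν - μ) (ν - μ) = en d ν ν - 2 * en d ν μ + en d μ μ := by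
  rw [en_sub_left hd, en_sub_right hd, en_sub_right hd, en_comm hd hsymm μ ν]
  ring

lemma en_le_two_mul_en_sub_en (hd : Continuous (Function.uncurry d))
    (hsymm : ∀ x y, d x y = d y x)
    (hq : ∀ ρ : SignedMeasure X, ρ Set.univ = (0 : ℝ) → en d ρ ρ ≤ 0)
    {μ ν : SignedMeasure X} (hμν : ν Set.univ = μ Set.univ) :
    en d ν ν ≤ 2 * en d ν μ - en d μ μ := by
  have h := hq (ν - μ) (by rw [_root_.sub_apply, hμν, sub_self])
  rw [en_sub_sub hd hsymm] at h
  linarith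

end Kernel

/-- If `μ_n` is a sequence of mass-one signed measures with `I(μ_n) → α` and
`d_{μ_n} → β·1` uniformly on `X`, then `M(X) ≤ 2β - α < ∞`, i.e. every mass-one
signed measure has energy at most `2β - α`. -/
theorem stmt11 {X : Type*} [MetricSpace X] [CompactSpace X] [MeasurableSpace X] [BorelSpace X]
    (hq : ∀ ν : SignedMeasure X, ν Set.univ = (0 : ℝ) → en (fun x y => dist x y) ν ν ≤ 0)
    (μ : ℕ → SignedMeasure X) (hμ : ∀ n, (μ n) Set.univ = (1 : ℝ)) (α β : ℝ)
    (hI : Filter.Tendsto (fun n => en (fun x y => dist x y) (μ n) (μ n))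
      Filter.atTop (nhds α))
    (hd : TendstoUniformly (fun n x => dPot (fun x y => dist x y) (μ n) x)
      (fun _ => β) Filter.atTop) :
    ∀ ν : SignedMeasure X, ν Set.univ = (1 : ℝ) →
      en (fun x y => dist x y) ν ν ≤ 2 * β - α := by
  intro ν hν
  have hdist : Continuous (Function.uncurry fun x y : X => dist x y) := continuous_dist
  have hcross : Filter.Tendsto (fun n => en (fun x y => dist x y) ν (μ n)) Filter.atTop
      (nhds β) := by
    have h := tendsto_sInt_of_tendstoUniformly ν (fun n => continuous_dPot hdist (μ n))
      continuous_const hd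
    rwa [sInt_const, hν, mul_one] at h
  refine ge_of_tendsto' ((hcross.const_mul 2).sub hI) fun n => ?_
  exact en_le_two_mul_en_sub_en hdist dist_comm hq (hν.trans (hμ n).symm)
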